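/- For every finite set B and every element f ∉ B, the marginal contribution of f to the measure I_P is: I_P(B ∪ {f}) − I_P(B) = |{g ∈ B : C(f,g) and ¬C(g,h) for all h ∈ B\{g}}| + (1 if there exists g ∈ B with C(f,g), and 0 otherwise). That is, adding f makes problematic exactly f itself (if it conflicts with some element of B) together with those elements of B that conflict with f but with no other element of B. -/
import Mathlib

open scoped BigOperators Classical

variable {α : Type*} [DecidableEq α]

/-- The inconsistency measure `I_P`: the number of "problematic" facts of `E`,
i.e., elements in conflict with some other element of `E`. -/
noncomputable def IP (C : α → α → Prop) (E : Finset α) : ℕ :=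
  (E.filter fun g => ∃ h ∈ E, h ≠ g ∧ C g h).card

/-- The marginal contribution of a new element `f` to `I_P`: it equals the number
of elements of `B` that conflict with `f` but with no other element of `B`, plus
one if `f` conflicts with some element of `B`. -/
theorem IP_marginal (C : α → α → Prop) (hsymm : Symmetric C) (B : Finset α) (f : α)
    (hf : f ∉ B) :
    (IP C (B ∪ {f}) : ℤ) - (IP C B : ℤ) =
      ((B.filter fun g => C f g ∧ ∀ h ∈ B \ {g}, ¬ C g h).card : ℤ) +
        (if ∃ g ∈ B, C f g then 1 else 0) := by
  classical
  have hne : ∀ g ∈ B, g ≠ f := fun g hg h => hf (h ▸ hg)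
  -- Step 1: rewrite the new filter set as a disjoint union
  have hsplit : (B ∪ {f}).filter (fun g => ∃ h ∈ B ∪ {f}, h ≠ g ∧ C g h)
      = (B.filter fun g => (∃ h ∈ B, h ≠ g ∧ C g h) ∨ C f g)
        ∪ (if ∃ g ∈ B, C f g then ({f} : Finset α) else ∅) := by
    ext x
    simp only [Finset.mem_filter, Finset.mem_union, Finset.mem_singleton]
    constructor
    · rintro ⟨hx1 | rfl, h, (hh | rfl), hne2, hC⟩
      · exact Or.inl ⟨hx1, Or.inl ⟨h, hh, hne2, hC⟩⟩
      · exact Or.inl ⟨hx1, Or.inr (hsymm hC)⟩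
      · have : ∃ g ∈ B, C x g := ⟨h, hh, hC⟩
        simp [this]
      · exact absurd rfl hne2
    · rintro (⟨hx1, hP | hC⟩ | hx2)
      · obtain ⟨h, hh, hne2, hC⟩ := hP
        exact ⟨Or.inl hx1, h, Or.inl hh, hne2, hC⟩
      · exact ⟨Or.inl hx1, f, Or.inr rfl, (hne x hx1).symm, hsymm hC⟩
      · by_cases hex : ∃ g ∈ B, C f g
        · simp only [hex, if_true, Finset.mem_singleton] at hx2
          subst hx2
          obtain ⟨g, hg, hC⟩ := hex
          exact ⟨Or.inr rfl, g, Or.inl hg, (hne g hg), hC⟩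
        · simp [hex] at hx2
  have hdisj : Disjoint (B.filter fun g => (∃ h ∈ B, h ≠ g ∧ C g h) ∨ C f g)
      (if ∃ g ∈ B, C f g then ({f} : Finset α) else ∅) := by
    split
    · simp only [Finset.disjoint_singleton_right, Finset.mem_filter]
      exact fun h => hf h.1
    · exact Finset.disjoint_empty_right _
  have h1 : IP C (B ∪ {f})
      = (B.filter fun g => (∃ h ∈ B, h ≠ g ∧ C g h) ∨ C f g).card
        + (if ∃ g ∈ B, C f g then 1 else 0) := by
    rw [IP, hsplit, Finset.card_union_of_disjoint hdisj]
    congr 1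
    split <;> simp
  -- Step 2: split the B filter
  have h2 : (B.filter fun g => (∃ h ∈ B, h ≠ g ∧ C g h) ∨ C f g)
      = (B.filter fun g => ∃ h ∈ B, h ≠ g ∧ C g h)
        ∪ (B.filter fun g => C f g ∧ ∀ h ∈ B \ {g}, ¬ C g h) := by
    ext x
    simp only [Finset.mem_filter, Finset.mem_union, Finset.mem_sdiff, Finset.mem_singleton]
    constructor
    · rintro ⟨hx, hP | hC⟩
      · exact Or.inl ⟨hx, hP⟩
      · by_cases hP : ∃ h ∈ B, h ≠ x ∧ C x h
        · exact Or.inl ⟨hx, hP⟩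
        · push_neg at hP
          exact Or.inr ⟨hx, hC, fun h ⟨hh, hhx⟩ => hP h hh hhx⟩
    · rintro (⟨hx, hP⟩ | ⟨hx, hC, _⟩)
      · exact ⟨hx, Or.inl hP⟩
      · exact ⟨hx, Or.inr hC⟩
  have hdisj2 : Disjoint (B.filter fun g => ∃ h ∈ B, h ≠ g ∧ C g h)
      (B.filter fun g => C f g ∧ ∀ h ∈ B \ {g}, ¬ C g h) := by
    rw [Finset.disjoint_left]
    intro x hx1 hx2
    simp only [Finset.mem_filter, Finset.mem_sdiff, Finset.mem_singleton] at hx1 hx2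
    obtain ⟨hx, h, hh, hhx, hC⟩ := hx1
    exact hx2.2.2 h ⟨hh, hhx⟩ hC
  have h3 : (B.filter fun g => (∃ h ∈ B, h ≠ g ∧ C g h) ∨ C f g).card
      = IP C B + (B.filter fun g => C f g ∧ ∀ h ∈ B \ {g}, ¬ C g h).card := by
    rw [h2, Finset.card_union_of_disjoint hdisj2]; rfl
  rw [h1, h3]
  push_cast
  split <;> ring
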